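/- arXiv:1710.07785 — 2 statements merged into one kernel-verified Lean document; each statement's English description precedes it below -/
import Mathlib

section
/- Let α = α₁ + uα₂ + vα₃ + uvα₄ be a unit in R with α₁,...,α₄ ∈ F_{p^t}, and let C = e₁C₁ ⊕ e₂C₂ ⊕ e₃C₃ ⊕ e₄C₄ be a linear code of length n over R. Then C is skew α-constacyclic over R if and only if C₁ is skew α₁-constacyclic, C₂ is skew (α₁+α₂)-constacyclic, C₃ is skew (α₁+α₃)-constacyclic, and C₄ is skew (α₁+α₂+α₃+α₄)-constacyclic over F_q. -/
/-- The standard form `a + u*b + v*c + u*v*d` of an element of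
`R = F_q + uF_q + vF_q + uvF_q`. -/
def stdForm (F R : Type*) [Field F] [CommRing R] [Algebra F R] (u v : R)
    (x : F × F × F × F) : R :=
  algebraMap F R x.1 + u * algebraMap F R x.2.1 + v * algebraMap F R x.2.2.1
    + u * v * algebraMap F R x.2.2.2

/-- The code `e₁C₁ ⊕ e₂C₂ ⊕ e₃C₃ ⊕ e₄C₄` over `R`. -/
def combSet (F R : Type*) [Field F] [CommRing R] [Algebra F R] (u v : R) {n : ℕ}
    (C₁ C₂ C₃ C₄ : Set (Fin n → F)) : Set (Fin n → R) :=
  {x | ∃ a ∈ C₁, ∃ b ∈ C₂, ∃ c ∈ C₃, ∃ d ∈ C₄, x = fun i =>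
    (1 - u - v + u * v) * algebraMap F R (a i) + (u - u * v) * algebraMap F R (b i)
      + (v - u * v) * algebraMap F R (c i) + u * v * algebraMap F R (d i)}

/-- The skew `β`-constacyclic shift `τ_β` with respect to `θ`. -/
def skewConstaShift {R : Type*} [Mul R] [One R] [DecidableEq R] (θ : R → R) (β : R)
    {n : ℕ} [NeZero n] (x : Fin n → R) : Fin n → R :=
  fun i => (if i = 0 then β else 1) * θ (x (i - 1))

/-!
Write `e₁, …, e₄` for the orthogonal idempotents, so that `R = ⊕ eᵢ F` and `x ↦ e₁x₁ + ⋯ + e₄x₄`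
is a bijection `F⁴ → R` (it differs from `stdForm` by an invertible change of coordinates).
Applied coordinatewise, it identifies `C` with `C₁ × C₂ × C₃ × C₄`, and it intertwines `τ_α` with
the product of the four shifts: the Frobenius is additive, so it commutes with the change of
coordinates and `θ` acts on each `eᵢ`-component as the Frobenius; and `α eᵢ = α⁽ⁱ⁾ eᵢ` with `α⁽ⁱ⁾`
the `i`-th constant of the statement, because `u` and `v` act on each `eᵢ` as `0` or `1`. A bijection
intertwining two maps carries invariant sets to invariant sets, and a product of nonempty sets is
invariant under a product map exactly when each factor is.
-/

theorem Function.Injective.image_image_eq_self_iff {α β : Type*} {Φ : α → β}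
    (hΦ : Function.Injective Φ) {f : α → α} {T : β → β} (h : Function.Semiconj Φ f T)
    (s : Set α) : T '' (Φ '' s) = Φ '' s ↔ f '' s = s := by
  have hcomm : T '' (Φ '' s) = Φ '' (f '' s) := by simp only [Set.image_image, h.eq]
  rw [hcomm, hΦ.image_injective.eq_iff]

theorem Set.prodMap_image_prod_eq_self_iff {α β : Type*} {f : α → α} {g : β → β}
    {s : Set α} {t : Set β} (hs : s.Nonempty) (ht : t.Nonempty) :
    Prod.map f g '' s ×ˢ t = s ×ˢ t ↔ f '' s = s ∧ g '' t = t := by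
  rw [Set.prodMap_image_prod, Set.prod_eq_prod_iff_of_nonempty ((hs.image f).prod (ht.image g))]

section Decomposition

variable (F R : Type*) [Field F] [CommRing R] [Algebra F R] (u v : R)

def idemComb (x : F × F × F × F) : R :=
  (1 - u - v + u * v) * algebraMap F R x.1 + (u - u * v) * algebraMap F R x.2.1
    + (v - u * v) * algebraMap F R x.2.2.1 + u * v * algebraMap F R x.2.2.2

def idemCombVec {ι : Type*} (x : (ι → F) × (ι → F) × (ι → F) × (ι → F)) : ι → R :=
  fun i => idemComb F R u v (x.1 i, x.2.1 i, x.2.2.1 i, x.2.2.2 i)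

theorem idemComb_eq_stdForm (x : F × F × F × F) :
    idemComb F R u v x =
      stdForm F R u v (x.1, x.2.1 - x.1, x.2.2.1 - x.1, x.1 - x.2.1 - x.2.2.1 + x.2.2.2) := by
  simp only [idemComb, stdForm, map_sub, map_add]
  ring

variable {F R u v}

theorem idemComb_injective (h : Function.Injective (stdForm F R u v)) :
    Function.Injective (idemComb F R u v) := by
  rintro ⟨a, b, c, d⟩ ⟨a', b', c', d'⟩ hx
  rw [idemComb_eq_stdForm, idemComb_eq_stdForm] at hx
  obtain ⟨ha, hb, hc, hd⟩ : a = a' ∧ b - a = b' - a' ∧ c - a = c' - a' ∧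
      a - b - c + d = a' - b' - c' + d' := by simpa only [Prod.mk.injEq] using h hx
  subst ha
  simp only [Prod.mk.injEq, true_and]
  exact ⟨by linear_combination hb, by linear_combination hc, by linear_combination hb + hc + hd⟩

theorem idemCombVec_injective {ι : Type*} (h : Function.Injective (stdForm F R u v)) :
    Function.Injective (idemCombVec F R u v (ι := ι)) := by
  intro x y hxy
  have hi i := idemComb_injective h (congrFun hxy i)
  simp only [Prod.mk.injEq] at hi
  ext i <;> simp [hi i]

theorem stdForm_mul_idemComb (hu : u * u = u) (hv : v * v = v) (α₁ α₂ α₃ α₄ a b c d : F) :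
    stdForm F R u v (α₁, α₂, α₃, α₄) * idemComb F R u v (a, b, c, d) =
      idemComb F R u v (α₁ * a, (α₁ + α₂) * b, (α₁ + α₃) * c, (α₁ + α₂ + α₃ + α₄) * d) := by
  simp only [stdForm, idemComb, map_mul, map_add]
  grind

theorem map_idemComb {G : Type*} [FunLike G F F] [AddMonoidHomClass G F F] (φ : G)
    {θ : R → R} (hθ : ∀ a b c d : F, θ (stdForm F R u v (a, b, c, d)) =
      stdForm F R u v (φ a, φ b, φ c, φ d)) (x : F × F × F × F) :
    θ (idemComb F R u v x) = idemComb F R u v (φ x.1, φ x.2.1, φ x.2.2.1, φ x.2.2.2) := by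
  rw [idemComb_eq_stdForm, hθ, idemComb_eq_stdForm]
  simp only [map_add, map_sub]

theorem combSet_eq_image {n : ℕ} (C₁ C₂ C₃ C₄ : Set (Fin n → F)) :
    combSet F R u v C₁ C₂ C₃ C₄ = idemCombVec F R u v '' (C₁ ×ˢ C₂ ×ˢ C₃ ×ˢ C₄) := by
  ext x
  constructor
  · rintro ⟨a, ha, b, hb, c, hc, d, hd, rfl⟩
    exact ⟨(a, b, c, d), ⟨ha, hb, hc, hd⟩, rfl⟩
  · rintro ⟨⟨a, b, c, d⟩, ⟨ha, hb, hc, hd⟩, rfl⟩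
    exact ⟨a, ha, b, hb, c, hc, d, hd, rfl⟩

theorem semiconj_idemCombVec_skewConstaShift [DecidableEq F] [DecidableEq R]
    (hu : u * u = u) (hv : v * v = v)
    {G : Type*} [FunLike G F F] [AddMonoidHomClass G F F] (φ : G)
    {θ : R → R} (hθ : ∀ a b c d : F, θ (stdForm F R u v (a, b, c, d)) =
      stdForm F R u v (φ a, φ b, φ c, φ d))
    (α₁ α₂ α₃ α₄ : F) {n : ℕ} [NeZero n] :
    Function.Semiconj (idemCombVec F R u v)
      (Prod.map (skewConstaShift φ α₁) <| Prod.map (skewConstaShift φ (α₁ + α₂)) <|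
        Prod.map (skewConstaShift φ (α₁ + α₃)) (skewConstaShift φ (α₁ + α₂ + α₃ + α₄)))
      (skewConstaShift (n := n) θ (stdForm F R u v (α₁, α₂, α₃, α₄))) := by
  intro x
  funext i
  simp only [idemCombVec, skewConstaShift, Prod.map, map_idemComb φ hθ]
  split_ifs
  · exact (stdForm_mul_idemComb hu hv ..).symm
  · simp only [one_mul]

end Decomposition

theorem stmt17_general (p m t : ℕ) (hp : p.Prime)
    (F : Type*) [Field F] [Fintype F] [DecidableEq F] (hF : Fintype.card F = p ^ m)
    (R : Type*) [CommRing R] [DecidableEq R] [Algebra F R] (u v : R)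
    (hu : u * u = u) (hv : v * v = v)
    (hbij : Function.Bijective (stdForm F R u v))
    (θ : R → R)
    (hθ : ∀ a b c d : F, θ (stdForm F R u v (a, b, c, d)) =
      stdForm F R u v (a ^ p ^ t, b ^ p ^ t, c ^ p ^ t, d ^ p ^ t))
    -- α = α₁ + uα₂ + vα₃ + uvα₄ with the αᵢ in F_{p^t} (fixed by the Frobenius x ↦ x^(p^t))
    (α₁ α₂ α₃ α₄ : F)
    (n : ℕ) [NeZero n]
    (C : Submodule R (Fin n → R)) (C₁ C₂ C₃ C₄ : Submodule F (Fin n → F))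
    (hC : (C : Set (Fin n → R)) = combSet F R u v (C₁ : Set (Fin n → F)) C₂ C₃ C₄) :
    skewConstaShift θ (stdForm F R u v (α₁, α₂, α₃, α₄)) '' (C : Set (Fin n → R)) = C ↔
      (skewConstaShift (· ^ p ^ t) α₁ '' (C₁ : Set (Fin n → F)) = C₁ ∧
       skewConstaShift (· ^ p ^ t) (α₁ + α₂) '' (C₂ : Set (Fin n → F)) = C₂ ∧
       skewConstaShift (· ^ p ^ t) (α₁ + α₃) '' (C₃ : Set (Fin n → F)) = C₃ ∧
       skewConstaShift (· ^ p ^ t) (α₁ + α₂ + α₃ + α₄) '' (C₄ : Set (Fin n → F)) = C₄) := by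
  have : Fact p.Prime := ⟨hp⟩
  have : CharP F p := charP_of_card_eq_prime_pow hF
  have hfrob : (· ^ p ^ t : F → F) = iterateFrobenius F p t := rfl
  have hne (D : Submodule F (Fin n → F)) : (D : Set (Fin n → F)).Nonempty := ⟨0, D.zero_mem⟩
  rw [hfrob, hC, combSet_eq_image, (idemCombVec_injective hbij.injective).image_image_eq_self_iff
      (semiconj_idemCombVec_skewConstaShift hu hv (iterateFrobenius F p t) hθ α₁ α₂ α₃ α₄),
    Set.prodMap_image_prod_eq_self_iff (hne C₁) ((hne C₂).prod ((hne C₃).prod (hne C₄))),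
    Set.prodMap_image_prod_eq_self_iff (hne C₂) ((hne C₃).prod (hne C₄)),
    Set.prodMap_image_prod_eq_self_iff (hne C₃) (hne C₄)]

theorem stmt17 (p m t : ℕ) (hp : p.Prime) (hodd : p ≠ 2) (ht : 0 < t) (htm : t ∣ m)
    (F : Type*) [Field F] [Fintype F] [DecidableEq F] (hF : Fintype.card F = p ^ m)
    (R : Type*) [CommRing R] [DecidableEq R] [Algebra F R] (u v : R)
    (hu : u * u = u) (hv : v * v = v)
    (hbij : Function.Bijective (stdForm F R u v))
    (θ : R → R)
    (hθ : ∀ a b c d : F, θ (stdForm F R u v (a, b, c, d)) =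
      stdForm F R u v (a ^ p ^ t, b ^ p ^ t, c ^ p ^ t, d ^ p ^ t))
    -- α = α₁ + uα₂ + vα₃ + uvα₄ with the αᵢ in F_{p^t} (fixed by the Frobenius x ↦ x^(p^t))
    (α₁ α₂ α₃ α₄ : F)
    (hfix₁ : α₁ ^ p ^ t = α₁) (hfix₂ : α₂ ^ p ^ t = α₂)
    (hfix₃ : α₃ ^ p ^ t = α₃) (hfix₄ : α₄ ^ p ^ t = α₄)
    (hαunit : IsUnit (stdForm F R u v (α₁, α₂, α₃, α₄)))
    (n : ℕ) [NeZero n]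
    (C : Submodule R (Fin n → R)) (C₁ C₂ C₃ C₄ : Submodule F (Fin n → F))
    (hC : (C : Set (Fin n → R)) = combSet F R u v (C₁ : Set (Fin n → F)) C₂ C₃ C₄) :
    skewConstaShift θ (stdForm F R u v (α₁, α₂, α₃, α₄)) '' (C : Set (Fin n → R)) = C ↔
      (skewConstaShift (· ^ p ^ t) α₁ '' (C₁ : Set (Fin n → F)) = C₁ ∧
       skewConstaShift (· ^ p ^ t) (α₁ + α₂) '' (C₂ : Set (Fin n → F)) = C₂ ∧
       skewConstaShift (· ^ p ^ t) (α₁ + α₃) '' (C₃ : Set (Fin n → F)) = C₃ ∧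
       skewConstaShift (· ^ p ^ t) (α₁ + α₂ + α₃ + α₄) '' (C₄ : Set (Fin n → F)) = C₄) :=
  stmt17_general p m t hp F hF R u v hu hv hbij θ hθ α₁ α₂ α₃ α₄ n C C₁ C₂ C₃ C₄ hC
end

section
/- Let α = α₁+uα₂+vα₃+uvα₄ be a unit in R with αᵢ ∈ F_{p^t}, and suppose f₁,...,f₄ ∈ F_q[x;θ_t] are monic right divisors of xⁿ-α₁, xⁿ-(α₁+α₂), xⁿ-(α₁+α₃), xⁿ-(α₁+α₂+α₃+α₄), respectively. Then f(x) = e₁f₁(x)+e₂f₂(x)+e₃f₃(x)+e₄f₄(x) is a right divisor of xⁿ-α in R[x;θ_t], and the skew α-constacyclic code C = e₁⟨f₁⟩ ⊕ e₂⟨f₂⟩ ⊕ e₃⟨f₃⟩ ⊕ e₄⟨f₄⟩ equals the left R[x;θ_t]-submodule generated by f(x). -/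
open Polynomial

/-- Multiplication in the skew polynomial ring `S[x;θ]`:
`(a xⁱ) * (b xʲ) = a θⁱ(b) x^(i+j)`. -/
noncomputable def skewMul {S : Type*} [CommRing S] (θ : S → S) (f g : Polynomial S) :
    Polynomial S :=
  ∑ i ∈ f.support, ∑ j ∈ g.support,
    Polynomial.C (f.coeff i * θ^[i] (g.coeff j)) * Polynomial.X ^ (i + j)

/-- Reduction of a skew polynomial modulo `xⁿ - β` (for `β` fixed by the automorphism),
giving the coefficient vector of the canonical representative of degree `< n`. -/
def redModC {S : Type*} [CommRing S] (n : ℕ) [NeZero n] (β : S) (f : Polynomial S) :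
    Fin n → S :=
  fun i => ∑ j ∈ f.support.filter (fun j => j % n = (i : ℕ)), β ^ (j / n) * f.coeff j

/-- The skew `β`-constacyclic code (left submodule of `S[x;θ]/⟨xⁿ-β⟩`) generated by `f`. -/
noncomputable def skewGenC {S : Type*} [CommRing S] (θ : S → S) (n : ℕ) [NeZero n] (β : S)
    (f : Polynomial S) : Set (Fin n → S) :=
  {c | ∃ h : Polynomial S, c = redModC n β (skewMul θ h f)}

/-!
The elements `e₁, e₂, e₃, e₄` form a complete family of orthogonal idempotents of `R`, and every
element of `R` can be written as `∑ eₖ cₖ` with `cₖ ∈ F_q`. In these coordinates `θ` is the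
Frobenius power `x ↦ x ^ p ^ t` applied to each `cₖ`, which (Frobenius being additive in
characteristic `p`) makes `θ` additive and `eₖ`-linear. Consequently skew multiplication splits
into components, `(∑ eₖ hₖ) ∗ (∑ eₖ fₖ) = ∑ eₖ (hₖ ∗ fₖ)`, and so does reduction modulo `xⁿ - α`,
because `eₖ α = eₖ βₖ` with `β = (α₁, α₁ + α₂, α₁ + α₃, α₁ + α₂ + α₃ + α₄)`. Both claims then hold
componentwise over `F_q`.
-/

section SkewPolynomial

variable {S : Type*} [CommRing S]

lemma skewMul_eq_sum_of_support_subset (θ : S →+ S) {f g : S[X]} {A B : Finset ℕ}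
    (hA : f.support ⊆ A) (hB : g.support ⊆ B) :
    skewMul θ f g = ∑ i ∈ A, ∑ j ∈ B, C (f.coeff i * θ^[i] (g.coeff j)) * X ^ (i + j) := by
  unfold skewMul
  rw [Finset.sum_subset hA fun i _ hi => by simp [notMem_support_iff.mp hi]]
  exact Finset.sum_congr rfl fun i _ => Finset.sum_subset hB fun j _ hj => by
    simp [notMem_support_iff.mp hj, iterate_map_zero]

lemma support_C_mul_subset (e : S) (f : S[X]) : (C e * f).support ⊆ f.support := by
  rw [C_mul']
  exact support_smul e f

lemma skewMul_add_left (θ : S →+ S) (f₁ f₂ g : S[X]) :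
    skewMul θ (f₁ + f₂) g = skewMul θ f₁ g + skewMul θ f₂ g := by
  rw [skewMul_eq_sum_of_support_subset θ (A := f₁.support ∪ f₂.support) support_add subset_rfl,
    skewMul_eq_sum_of_support_subset θ (A := f₁.support ∪ f₂.support) Finset.subset_union_left
      subset_rfl,
    skewMul_eq_sum_of_support_subset θ (A := f₁.support ∪ f₂.support) Finset.subset_union_right
      subset_rfl]
  simp only [coeff_add, add_mul, map_add, ← Finset.sum_add_distrib]

lemma skewMul_add_right (θ : S →+ S) (f g₁ g₂ : S[X]) :
    skewMul θ f (g₁ + g₂) = skewMul θ f g₁ + skewMul θ f g₂ := by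
  rw [skewMul_eq_sum_of_support_subset θ (B := g₁.support ∪ g₂.support) subset_rfl support_add,
    skewMul_eq_sum_of_support_subset θ (B := g₁.support ∪ g₂.support) subset_rfl
      Finset.subset_union_left,
    skewMul_eq_sum_of_support_subset θ (B := g₁.support ∪ g₂.support) subset_rfl
      Finset.subset_union_right]
  simp only [coeff_add, iterate_map_add, mul_add, map_add, add_mul, ← Finset.sum_add_distrib]

lemma skewMul_sum_left (θ : S →+ S) {ι : Type*} (s : Finset ι) (f : ι → S[X]) (g : S[X]) :
    skewMul θ (∑ k ∈ s, f k) g = ∑ k ∈ s, skewMul θ (f k) g :=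
  map_sum (AddMonoidHom.mk' (skewMul θ · g) fun f₁ f₂ => skewMul_add_left θ f₁ f₂ g) f s

lemma skewMul_sum_right (θ : S →+ S) {ι : Type*} (s : Finset ι) (f : S[X]) (g : ι → S[X]) :
    skewMul θ f (∑ k ∈ s, g k) = ∑ k ∈ s, skewMul θ f (g k) :=
  map_sum (AddMonoidHom.mk' (skewMul θ f) (skewMul_add_right θ f)) g s

lemma skewMul_C_mul_left (θ : S →+ S) (e : S) (f g : S[X]) :
    skewMul θ (C e * f) g = C e * skewMul θ f g := by
  rw [skewMul_eq_sum_of_support_subset θ (support_C_mul_subset e f) subset_rfl]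
  simp only [skewMul, Finset.mul_sum, coeff_C_mul, mul_assoc, C_mul]

lemma skewMul_C_mul_right (θ : S →+ S) {e : S} (hθe : ∀ x, θ (e * x) = e * θ x)
    (f g : S[X]) : skewMul θ f (C e * g) = C e * skewMul θ f g := by
  have hiter : ∀ i x, θ^[i] (e * x) = e * θ^[i] x := fun i =>
    Function.Commute.iterate_left (fun x => hθe x) i
  rw [skewMul_eq_sum_of_support_subset θ subset_rfl (support_C_mul_subset e g)]
  simp only [skewMul, Finset.mul_sum, coeff_C_mul, hiter, mul_left_comm _ e, C_mul, mul_assoc]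

lemma skewMul_map {F : Type*} [CommRing F] (θ : S →+ S) (φ : F →+* S) (σ : F → F)
    (hθφ : ∀ a, θ (φ a) = φ (σ a)) (f g : F[X]) :
    skewMul θ (f.map φ) (g.map φ) = (skewMul σ f g).map φ := by
  have hiter : ∀ i a, θ^[i] (φ a) = φ (σ^[i] a) := fun i a =>
    (Function.Semiconj.iterate_right (fun a => (hθφ a).symm) i a).symm
  rw [skewMul_eq_sum_of_support_subset θ (support_map_subset φ f) (support_map_subset φ g)]
  simp only [skewMul, Polynomial.map_sum, Polynomial.map_mul, Polynomial.map_pow, map_X, map_C,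
    coeff_map, hiter, map_mul]

lemma skewMul_sum_C_mul {I : Type*} [Fintype I] {e : I → S} (he : OrthogonalIdempotents e)
    (θ : S →+ S) (hθe : ∀ k x, θ (e k * x) = e k * θ x) (g f : I → S[X]) :
    skewMul θ (∑ k, C (e k) * g k) (∑ k, C (e k) * f k) = ∑ k, C (e k) * skewMul θ (g k) (f k) := by
  rw [skewMul_sum_right]
  refine Finset.sum_congr rfl fun k _ => ?_
  rw [skewMul_C_mul_right θ (hθe k), skewMul_sum_left, Finset.mul_sum,
    Finset.sum_eq_single k (fun j _ hjk => ?_) (by simp)]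
  · rw [skewMul_C_mul_left, ← mul_assoc, ← C_mul, (he.idem k).eq]
  · rw [skewMul_C_mul_left, ← mul_assoc, ← C_mul, he.ortho hjk.symm, C_0, zero_mul]

end SkewPolynomial

section Reduction

variable {S : Type*} [CommRing S] {n : ℕ} [NeZero n]

lemma redModC_eq_sum_of_support_subset (β : S) {f : S[X]} {A : Finset ℕ}
    (hA : f.support ⊆ A) (i : Fin n) :
    redModC n β f i = ∑ j ∈ A.filter (fun j => j % n = i), β ^ (j / n) * f.coeff j := by
  refine Finset.sum_subset (Finset.filter_subset_filter _ hA) fun j hjA hj => ?_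
  rw [notMem_support_iff.mp fun h => hj (Finset.mem_filter.mpr
    ⟨h, (Finset.mem_filter.mp hjA).2⟩), mul_zero]

lemma redModC_add (β : S) (f g : S[X]) :
    redModC n β (f + g) = redModC n β f + redModC n β g := by
  funext i
  rw [Pi.add_apply,
    redModC_eq_sum_of_support_subset β (A := f.support ∪ g.support) support_add,
    redModC_eq_sum_of_support_subset β (A := f.support ∪ g.support) Finset.subset_union_left,
    redModC_eq_sum_of_support_subset β (A := f.support ∪ g.support) Finset.subset_union_right]
  simp only [coeff_add, mul_add, Finset.sum_add_distrib]

lemma redModC_sum (β : S) {ι : Type*} (s : Finset ι) (f : ι → S[X]) :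
    redModC n β (∑ k ∈ s, f k) = ∑ k ∈ s, redModC n β (f k) :=
  map_sum (AddMonoidHom.mk' (redModC n β) (redModC_add β)) f s

lemma redModC_C_mul_of_mul_eq {e α β : S} (h : e * α = e * β) (f : S[X]) (i : Fin n) :
    redModC n α (C e * f) i = e * redModC n β f i := by
  have hpow : ∀ k, e * α ^ k = e * β ^ k := by
    intro k
    induction k with
    | zero => rw [pow_zero, pow_zero]
    | succ k ih => rw [pow_succ, pow_succ, ← mul_assoc, ih, mul_right_comm, h, mul_right_comm,
        mul_assoc]
  rw [redModC_eq_sum_of_support_subset α (support_C_mul_subset e f), redModC, Finset.mul_sum]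
  refine Finset.sum_congr rfl fun j _ => ?_
  rw [coeff_C_mul, mul_left_comm, ← mul_assoc e, hpow, mul_assoc]

lemma redModC_map {F : Type*} [CommRing F] (φ : F →+* S) (β : F) (f : F[X]) (i : Fin n) :
    redModC n (φ β) (f.map φ) i = φ (redModC n β f i) := by
  rw [redModC_eq_sum_of_support_subset (φ β) (support_map_subset φ f), redModC, map_sum]
  simp only [coeff_map, map_mul, map_pow]

end Reduction

section Components

variable {I F R : Type*} [Fintype I] [CommRing F] [CommRing R]

def componentSum (e : I → R) (φ : F →+* R) (c : I → F) : R :=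
  ∑ k, e k * φ (c k)

lemma OrthogonalIdempotents.mul_sum_mul {e : I → R} (he : OrthogonalIdempotents e) (j : I)
    (x : I → R) : e j * ∑ k, e k * x k = e j * x j := by
  classical
  simp only [Finset.mul_sum, ← mul_assoc, he.mul_eq, ite_mul, zero_mul, Finset.sum_ite_eq,
    Finset.mem_univ, if_true]

variable {e : I → R} {φ : F →+* R}

lemma componentSum_add (a b : I → F) :
    componentSum e φ (a + b) = componentSum e φ a + componentSum e φ b := by
  simp only [componentSum, Pi.add_apply, map_add, mul_add, Finset.sum_add_distrib]

lemma componentSum_single [DecidableEq I] (j : I) (a : F) :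
    componentSum e φ (Pi.single j a) = e j * φ a := by
  simp only [componentSum, Pi.single_apply, apply_ite φ, map_zero, mul_ite, mul_zero,
    Finset.sum_ite_eq', Finset.mem_univ, if_true]

lemma exists_eq_sum_C_mul_map (hsurj : Function.Surjective (componentSum e φ)) (H : R[X]) :
    ∃ P : I → F[X], H = ∑ k, C (e k) * (P k).map φ := by
  induction H using Polynomial.induction_on' with
  | add H₁ H₂ ih₁ ih₂ =>
    obtain ⟨P₁, rfl⟩ := ih₁
    obtain ⟨P₂, rfl⟩ := ih₂
    exact ⟨P₁ + P₂, by
      simp only [Pi.add_apply, Polynomial.map_add, mul_add, Finset.sum_add_distrib]⟩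
  | monomial d r =>
    obtain ⟨c, rfl⟩ := hsurj r
    exact ⟨fun k => monomial d (c k), by
      simp only [componentSum, map_sum, Polynomial.map_monomial, C_mul_monomial]⟩

def ActsComponentwise (e : I → R) (φ : F →+* R) (σ : F →+* F) (θ : R → R) : Prop :=
  ∀ c, θ (componentSum e φ c) = componentSum e φ (σ ∘ c)

namespace ActsComponentwise

variable {σ : F →+* F} {θ : R → R}

lemma map_add (hθ : ActsComponentwise e φ σ θ) (hsurj : Function.Surjective (componentSum e φ))
    (x y : R) : θ (x + y) = θ x + θ y := by
  obtain ⟨a, rfl⟩ := hsurj x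
  obtain ⟨b, rfl⟩ := hsurj y
  rw [← componentSum_add, hθ, hθ, hθ, ← componentSum_add]
  congr 1
  funext k
  exact _root_.map_add σ (a k) (b k)

lemma map_idempotent_mul (hθ : ActsComponentwise e φ σ θ) (he : OrthogonalIdempotents e)
    (hsurj : Function.Surjective (componentSum e φ)) (j : I) (x : R) :
    θ (e j * x) = e j * θ x := by
  classical
  obtain ⟨c, rfl⟩ := hsurj x
  have hσ : σ ∘ Pi.single j (c j) = Pi.single j (σ (c j)) := by
    funext k
    simp only [Function.comp_apply, Pi.single_apply, apply_ite σ, map_zero]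
  rw [hθ, componentSum, componentSum, he.mul_sum_mul, he.mul_sum_mul, ← componentSum_single,
    hθ, hσ, componentSum_single, Function.comp_apply]

lemma apply_ringHom (hθ : ActsComponentwise e φ σ θ) (he : CompleteOrthogonalIdempotents e)
    (a : F) : θ (φ a) = φ (σ a) := by
  have hconst : ∀ b, componentSum e φ (fun _ => b) = φ b := fun b => by
    rw [componentSum, ← Finset.sum_mul, he.complete, one_mul]
  rw [← hconst a, hθ]
  exact hconst (σ a)

def toAddMonoidHom (hθ : ActsComponentwise e φ σ θ)
    (hsurj : Function.Surjective (componentSum e φ)) : R →+ R :=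
  AddMonoidHom.mk' θ (hθ.map_add hsurj)

end ActsComponentwise

end Components

section Codes

variable {I F R : Type*} [Fintype I] [CommRing F] [CommRing R]
  {e : I → R} {φ : F →+* R} {θ : R →+ R} {σ : F → F}

theorem skewMul_sum_C_mul_map (he : OrthogonalIdempotents e)
    (hθe : ∀ k x, θ (e k * x) = e k * θ x) (hθφ : ∀ a, θ (φ a) = φ (σ a)) (g f : I → F[X]) :
    skewMul θ (∑ k, C (e k) * (g k).map φ) (∑ k, C (e k) * (f k).map φ)
      = ∑ k, C (e k) * (skewMul σ (g k) (f k)).map φ := by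
  simp only [skewMul_sum_C_mul he θ hθe, skewMul_map θ φ σ hθφ]

theorem exists_X_pow_sub_C_eq_skewMul (he : CompleteOrthogonalIdempotents e)
    (hθe : ∀ k x, θ (e k * x) = e k * θ x) (hθφ : ∀ a, θ (φ a) = φ (σ a)) (n : ℕ)
    (f : I → F[X]) (β : I → F) (hdvd : ∀ k, ∃ h, X ^ n - C (β k) = skewMul σ h (f k)) :
    ∃ H, X ^ n - C (componentSum e φ β) = skewMul θ H (∑ k, C (e k) * (f k).map φ) := by
  choose h hh using hdvd
  refine ⟨∑ k, C (e k) * (h k).map φ, ?_⟩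
  simp only [skewMul_sum_C_mul_map he.toOrthogonalIdempotents hθe hθφ, ← hh,
    Polynomial.map_sub, Polynomial.map_pow, map_X, map_C, mul_sub, Finset.sum_sub_distrib,
    ← Finset.sum_mul, ← map_sum, he.complete, C_1, one_mul, componentSum, ← C_mul]

theorem skewGenC_sum_C_mul_map (he : OrthogonalIdempotents e)
    (hsurj : Function.Surjective (componentSum e φ))
    (hθe : ∀ k x, θ (e k * x) = e k * θ x) (hθφ : ∀ a, θ (φ a) = φ (σ a)) (n : ℕ) [NeZero n]
    (f : I → F[X]) (β : I → F) :
    skewGenC θ n (componentSum e φ β) (∑ k, C (e k) * (f k).map φ)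
      = {x | ∃ c : I → Fin n → F, (∀ k, c k ∈ skewGenC σ n (β k) (f k)) ∧
          x = fun i => componentSum e φ fun k => c k i} := by
  have hred : ∀ g : I → F[X],
      redModC n (componentSum e φ β)
          (skewMul θ (∑ k, C (e k) * (g k).map φ) (∑ k, C (e k) * (f k).map φ))
        = fun i => componentSum e φ fun k => redModC n (β k) (skewMul σ (g k) (f k)) i := by
    intro g
    funext i
    rw [skewMul_sum_C_mul_map he hθe hθφ, redModC_sum, Finset.sum_apply, componentSum]
    refine Finset.sum_congr rfl fun k _ => ?_
    rw [redModC_C_mul_of_mul_eq (he.mul_sum_mul k _), redModC_map]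
  ext x
  constructor
  · rintro ⟨H, rfl⟩
    obtain ⟨g, rfl⟩ := exists_eq_sum_C_mul_map hsurj H
    exact ⟨_, fun k => ⟨g k, rfl⟩, hred g⟩
  · rintro ⟨c, hc, rfl⟩
    choose g hg using hc
    exact ⟨∑ k, C (e k) * (g k).map φ, by simp only [hred g, hg]⟩

end Codes

section UV

variable {F R : Type*} [Field F] [CommRing R] [Algebra F R] {u v : R}

def uvIdempotents (u v : R) : Fin 4 → R :=
  ![1 - u - v + u * v, u - u * v, v - u * v, u * v]

lemma completeOrthogonalIdempotents_uvIdempotents (hu : IsIdempotentElem u)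
    (hv : IsIdempotentElem v) : CompleteOrthogonalIdempotents (uvIdempotents u v) := by
  rw [CompleteOrthogonalIdempotents.iff_ortho_complete]
  unfold IsIdempotentElem at hu hv
  refine ⟨fun i j hij => ?_, ?_⟩
  · fin_cases i <;> fin_cases j <;>
      simp only [Fin.zero_eta, Fin.mk_one, Fin.reduceFinMk, Fin.isValue, ne_eq, not_true_eq_false,
        uvIdempotents, Matrix.cons_val_zero, Matrix.cons_val_one, Matrix.cons_val] at hij ⊢ <;>
      grind
  · simp only [uvIdempotents, Fin.sum_univ_four, Matrix.cons_val_zero, Matrix.cons_val_one,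
      Matrix.cons_val]
    ring

lemma stdForm_eq_componentSum (a b c d : F) :
    stdForm F R u v (a, b, c, d)
      = componentSum (uvIdempotents u v) (algebraMap F R) ![a, a + b, a + c, a + b + c + d] := by
  simp only [stdForm, componentSum, uvIdempotents, Fin.sum_univ_four, Matrix.cons_val_zero,
    Matrix.cons_val_one, Matrix.cons_val, map_add]
  ring

lemma componentSum_uvIdempotents_eq_stdForm (c : Fin 4 → F) :
    componentSum (uvIdempotents u v) (algebraMap F R) c
      = stdForm F R u v (c 0, c 1 - c 0, c 2 - c 0, c 3 - c 1 - c 2 + c 0) := by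
  simp only [stdForm, componentSum, uvIdempotents, Fin.sum_univ_four, Matrix.cons_val_zero,
    Matrix.cons_val_one, Matrix.cons_val, map_add, map_sub]
  ring

lemma surjective_componentSum_uvIdempotents (h : Function.Surjective (stdForm F R u v)) :
    Function.Surjective (componentSum (uvIdempotents u v) (algebraMap F R)) := by
  intro r
  obtain ⟨⟨a, b, c, d⟩, rfl⟩ := h r
  exact ⟨_, (stdForm_eq_componentSum a b c d).symm⟩

lemma actsComponentwise_uvIdempotents (σ : F →+* F) {θ : R → R}
    (hθ : ∀ a b c d, θ (stdForm F R u v (a, b, c, d)) = stdForm F R u v (σ a, σ b, σ c, σ d)) :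
    ActsComponentwise (uvIdempotents u v) (algebraMap F R) σ θ := by
  intro c
  rw [componentSum_uvIdempotents_eq_stdForm, hθ, componentSum_uvIdempotents_eq_stdForm]
  simp only [Function.comp_apply, map_sub, map_add]

lemma combSet_eq_setOf_componentSum {n : ℕ} (C : Fin 4 → Set (Fin n → F)) :
    combSet F R u v (C 0) (C 1) (C 2) (C 3)
      = {x | ∃ c : Fin 4 → Fin n → F, (∀ k, c k ∈ C k) ∧
          x = fun i => componentSum (uvIdempotents u v) (algebraMap F R) fun k => c k i} := by
  ext x
  simp only [combSet, componentSum, uvIdempotents, Fin.sum_univ_four, Set.mem_ofPred_eq,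
    Matrix.cons_val_zero, Matrix.cons_val_one, Matrix.cons_val]
  constructor
  · rintro ⟨a, ha, b, hb, c, hc, d, hd, rfl⟩
    exact ⟨![a, b, c, d], fun k => by fin_cases k <;> assumption, rfl⟩
  · rintro ⟨c, hc, rfl⟩
    exact ⟨c 0, hc 0, c 1, hc 1, c 2, hc 2, c 3, hc 3, rfl⟩

end UV

theorem stmt18_general (p m t : ℕ) (hp : p.Prime)
    (F : Type*) [Field F] [Fintype F] (hF : Fintype.card F = p ^ m)
    (R : Type*) [CommRing R] [Algebra F R] (u v : R)
    (hu : u * u = u) (hv : v * v = v)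
    (hbij : Function.Bijective (stdForm F R u v))
    (θ : R → R)
    (hθ : ∀ a b c d : F, θ (stdForm F R u v (a, b, c, d)) =
      stdForm F R u v (a ^ p ^ t, b ^ p ^ t, c ^ p ^ t, d ^ p ^ t))
    (α₁ α₂ α₃ α₄ : F)
    (n : ℕ) [NeZero n]
    (f₁ f₂ f₃ f₄ : Polynomial F)
    (hdvd₁ : ∃ h, (X ^ n - Polynomial.C α₁ : Polynomial F) = skewMul (· ^ p ^ t) h f₁)
    (hdvd₂ : ∃ h, (X ^ n - Polynomial.C (α₁ + α₂) : Polynomial F) = skewMul (· ^ p ^ t) h f₂)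
    (hdvd₃ : ∃ h, (X ^ n - Polynomial.C (α₁ + α₃) : Polynomial F) = skewMul (· ^ p ^ t) h f₃)
    (hdvd₄ : ∃ h, (X ^ n - Polynomial.C (α₁ + α₂ + α₃ + α₄) : Polynomial F)
      = skewMul (· ^ p ^ t) h f₄) :
    let ι := algebraMap F R
    let α : R := stdForm F R u v (α₁, α₂, α₃, α₄)
    let fmix : Polynomial R :=
      Polynomial.C (1 - u - v + u * v) * f₁.map ι + Polynomial.C (u - u * v) * f₂.map ι
        + Polynomial.C (v - u * v) * f₃.map ι + Polynomial.C (u * v) * f₄.map ι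
    -- fmix is a right divisor of xⁿ - α in R[x;θ]
    (∃ h : Polynomial R, (X ^ n - Polynomial.C α : Polynomial R) = skewMul θ h fmix) ∧
    -- and the skew α-constacyclic code e₁⟨f₁⟩ ⊕ e₂⟨f₂⟩ ⊕ e₃⟨f₃⟩ ⊕ e₄⟨f₄⟩ is generated by fmix
    combSet F R u v (skewGenC (· ^ p ^ t) n α₁ f₁) (skewGenC (· ^ p ^ t) n (α₁ + α₂) f₂)
        (skewGenC (· ^ p ^ t) n (α₁ + α₃) f₃) (skewGenC (· ^ p ^ t) n (α₁ + α₂ + α₃ + α₄) f₄)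
      = skewGenC θ n α fmix := by
  intro ι α fmix
  have : Fact p.Prime := ⟨hp⟩
  have : CharP F p := charP_of_card_eq_prime_pow hF
  have he := completeOrthogonalIdempotents_uvIdempotents hu hv
  have hsurj := surjective_componentSum_uvIdempotents (F := F) hbij.2
  have hθc : ActsComponentwise (uvIdempotents u v) ι (iterateFrobenius F p t) θ :=
    actsComponentwise_uvIdempotents _ (by simpa only [iterateFrobenius_def] using hθ)
  let θ' : R →+ R := hθc.toAddMonoidHom hsurj
  have hθe : ∀ k x, θ' (uvIdempotents u v k * x) = uvIdempotents u v k * θ' x :=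
    hθc.map_idempotent_mul he.toOrthogonalIdempotents hsurj
  have hθι : ∀ a, θ' (ι a) = ι (a ^ p ^ t) := fun a => by
    rw [← iterateFrobenius_def]
    exact hθc.apply_ringHom he a
  have hfmix : fmix = ∑ k, C (uvIdempotents u v k) * (![f₁, f₂, f₃, f₄] k).map ι := by
    simp only [fmix, uvIdempotents, Fin.sum_univ_four, Matrix.cons_val_zero, Matrix.cons_val_one,
      Matrix.cons_val]
  have hα : α = componentSum (uvIdempotents u v) ι ![α₁, α₁ + α₂, α₁ + α₃, α₁ + α₂ + α₃ + α₄] :=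
    stdForm_eq_componentSum α₁ α₂ α₃ α₄
  rw [hfmix, hα]
  refine ⟨exists_X_pow_sub_C_eq_skewMul he hθe hθι n _ _ fun k => ?_, ?_⟩
  · fin_cases k
    exacts [hdvd₁, hdvd₂, hdvd₃, hdvd₄]
  · exact (combSet_eq_setOf_componentSum fun k => skewGenC (· ^ p ^ t) n
        (![α₁, α₁ + α₂, α₁ + α₃, α₁ + α₂ + α₃ + α₄] k) (![f₁, f₂, f₃, f₄] k)).trans
      (skewGenC_sum_C_mul_map he.toOrthogonalIdempotents hsurj hθe hθι n _ _).symm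

theorem stmt18 (p m t : ℕ) (hp : p.Prime) (hodd : p ≠ 2) (ht : 0 < t) (htm : t ∣ m)
    (F : Type*) [Field F] [Fintype F] (hF : Fintype.card F = p ^ m)
    (R : Type*) [CommRing R] [Algebra F R] (u v : R)
    (hu : u * u = u) (hv : v * v = v)
    (hbij : Function.Bijective (stdForm F R u v))
    (θ : R → R)
    (hθ : ∀ a b c d : F, θ (stdForm F R u v (a, b, c, d)) =
      stdForm F R u v (a ^ p ^ t, b ^ p ^ t, c ^ p ^ t, d ^ p ^ t))
    (α₁ α₂ α₃ α₄ : F)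
    (hfix₁ : α₁ ^ p ^ t = α₁) (hfix₂ : α₂ ^ p ^ t = α₂)
    (hfix₃ : α₃ ^ p ^ t = α₃) (hfix₄ : α₄ ^ p ^ t = α₄)
    (hαunit : IsUnit (stdForm F R u v (α₁, α₂, α₃, α₄)))
    (n : ℕ) [NeZero n]
    (f₁ f₂ f₃ f₄ : Polynomial F)
    (hmonic : f₁.Monic ∧ f₂.Monic ∧ f₃.Monic ∧ f₄.Monic)
    (hdvd₁ : ∃ h, (X ^ n - Polynomial.C α₁ : Polynomial F) = skewMul (· ^ p ^ t) h f₁)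
    (hdvd₂ : ∃ h, (X ^ n - Polynomial.C (α₁ + α₂) : Polynomial F) = skewMul (· ^ p ^ t) h f₂)
    (hdvd₃ : ∃ h, (X ^ n - Polynomial.C (α₁ + α₃) : Polynomial F) = skewMul (· ^ p ^ t) h f₃)
    (hdvd₄ : ∃ h, (X ^ n - Polynomial.C (α₁ + α₂ + α₃ + α₄) : Polynomial F)
      = skewMul (· ^ p ^ t) h f₄) :
    let ι := algebraMap F R
    let α : R := stdForm F R u v (α₁, α₂, α₃, α₄)
    let fmix : Polynomial R :=
      Polynomial.C (1 - u - v + u * v) * f₁.map ι + Polynomial.C (u - u * v) * f₂.map ι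
        + Polynomial.C (v - u * v) * f₃.map ι + Polynomial.C (u * v) * f₄.map ι
    -- fmix is a right divisor of xⁿ - α in R[x;θ]
    (∃ h : Polynomial R, (X ^ n - Polynomial.C α : Polynomial R) = skewMul θ h fmix) ∧
    -- and the skew α-constacyclic code e₁⟨f₁⟩ ⊕ e₂⟨f₂⟩ ⊕ e₃⟨f₃⟩ ⊕ e₄⟨f₄⟩ is generated by fmix
    combSet F R u v (skewGenC (· ^ p ^ t) n α₁ f₁) (skewGenC (· ^ p ^ t) n (α₁ + α₂) f₂)
        (skewGenC (· ^ p ^ t) n (α₁ + α₃) f₃) (skewGenC (· ^ p ^ t) n (α₁ + α₂ + α₃ + α₄) f₄)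
      = skewGenC θ n α fmix :=
  stmt18_general p m t hp F hF R u v hu hv hbij θ hθ α₁ α₂ α₃ α₄ n f₁ f₂ f₃ f₄ hdvd₁ hdvd₂ hdvd₃
    hdvd₄
end
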